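/- The following commutator identities hold in End(Λ(V)): L_𝓡∘(D∘L_{e₀}) − (D∘L_{e₀})∘L_𝓡 = L_{𝓡₀}, and L_𝓡∘(L_{e₀}∘D) − (L_{e₀}∘D)∘L_𝓡 = −L_{𝓡₀}. -/
import Mathlib


/-!
Let `V = ℝⁿ ⊕ ℝⁿ` with `e_i` (resp. `ê_i`) the images in `Λ(V)` of the standard basis of
the first (resp. second) summand, `φ ∈ V*` the covector dual to `e₀`, `D` the interior
product by `φ`, `L_a` left multiplication by `a`, and, given coefficients `R_{ijkl}` with
`R_{ijkl} = -R_{jikl}`,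
`𝓡 = (1/8)·Σ R_{ijkl} e_i e_j ê_k ê_l`, `𝓡₀ = (1/4)·Σ R_{0jkl} e₀ e_j ê_k ê_l`.
STATEMENT: `[L_𝓡, D∘L_{e₀}] = L_{𝓡₀}` and `[L_𝓡, L_{e₀}∘D] = -L_{𝓡₀}`.
-/

/-- `e_i`: the image in `Λ(ℝⁿ ⊕ ℝⁿ)` of the `i`-th standard basis vector of the first summand. -/
noncomputable def eB (n : ℕ) (i : Fin n) :
    ExteriorAlgebra ℝ ((Fin n → ℝ) × (Fin n → ℝ)) :=
  ExteriorAlgebra.ι ℝ (Pi.single i 1, 0)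

/-- `ê_i`: the image in `Λ(ℝⁿ ⊕ ℝⁿ)` of the `i`-th standard basis vector of the second summand. -/
noncomputable def eH (n : ℕ) (i : Fin n) :
    ExteriorAlgebra ℝ ((Fin n → ℝ) × (Fin n → ℝ)) :=
  ExteriorAlgebra.ι ℝ ((0 : Fin n → ℝ), Pi.single i 1)

/-- The covector `φ` with `φ(e₀) = 1`, vanishing on `e₁,…,e_{n-1}` and on all `ê_k`. -/
noncomputable def phi0 (n : ℕ) (hn : 0 < n) :
    Module.Dual ℝ ((Fin n → ℝ) × (Fin n → ℝ)) :=
  (LinearMap.proj (⟨0, hn⟩ : Fin n) : (Fin n → ℝ) →ₗ[ℝ] ℝ).comp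
    (LinearMap.fst ℝ (Fin n → ℝ) (Fin n → ℝ))

/-- `D`: interior product (left contraction) by `φ` on `Λ(ℝⁿ ⊕ ℝⁿ)`. -/
noncomputable def DOp (n : ℕ) (hn : 0 < n) :
    Module.End ℝ (ExteriorAlgebra ℝ ((Fin n → ℝ) × (Fin n → ℝ))) :=
  CliffordAlgebra.contractLeft (Q := (0 : QuadraticForm ℝ ((Fin n → ℝ) × (Fin n → ℝ))))
    (phi0 n hn)

/-- `L_a`: left multiplication by `a` on `Λ(ℝⁿ ⊕ ℝⁿ)`. -/
noncomputable def mulL (n : ℕ) (a : ExteriorAlgebra ℝ ((Fin n → ℝ) × (Fin n → ℝ))) :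
    Module.End ℝ (ExteriorAlgebra ℝ ((Fin n → ℝ) × (Fin n → ℝ))) :=
  LinearMap.mulLeft ℝ a

/-- `𝓡 = (1/8)·Σ_{i,j,k,l} R_{ijkl}·e_i·e_j·ê_k·ê_l`. -/
noncomputable def curvR (n : ℕ) (R : Fin n → Fin n → Fin n → Fin n → ℝ) :
    ExteriorAlgebra ℝ ((Fin n → ℝ) × (Fin n → ℝ)) :=
  ((8 : ℝ)⁻¹) • ∑ i, ∑ j, ∑ k, ∑ l, R i j k l • (eB n i * eB n j * eH n k * eH n l)

/-- `𝓡₀ = (1/4)·Σ_{j,k,l} R_{0jkl}·e₀·e_j·ê_k·ê_l`. -/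
noncomputable def curvR0 (n : ℕ) (hn : 0 < n) (R : Fin n → Fin n → Fin n → Fin n → ℝ) :
    ExteriorAlgebra ℝ ((Fin n → ℝ) × (Fin n → ℝ)) :=
  ((4 : ℝ)⁻¹) • ∑ j, ∑ k, ∑ l,
    R ⟨0, hn⟩ j k l • (eB n ⟨0, hn⟩ * eB n j * eH n k * eH n l)


section
variable (n : ℕ) (hn : 0 < n)

lemma D_mul_ι (v : (Fin n → ℝ) × (Fin n → ℝ)) (x : ExteriorAlgebra ℝ ((Fin n → ℝ) × (Fin n → ℝ))) :
    DOp n hn (ExteriorAlgebra.ι ℝ v * x) = phi0 n hn v • x - ExteriorAlgebra.ι ℝ v * DOp n hn x :=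
  CliffordAlgebra.contractLeft_ι_mul _ _ _

lemma phi_eB_val (i : Fin n) : phi0 n hn (Pi.single i 1, 0) = if (⟨0,hn⟩ : Fin n) = i then 1 else 0 := by
  simp [phi0, Pi.single_apply]

lemma phi_eH_val (k : Fin n) : phi0 n hn ((0 : Fin n → ℝ), Pi.single k 1) = 0 := by
  simp [phi0]

lemma ι_anticomm (x y : (Fin n → ℝ) × (Fin n → ℝ)) :
    ExteriorAlgebra.ι ℝ x * ExteriorAlgebra.ι ℝ y = -(ExteriorAlgebra.ι ℝ y * ExteriorAlgebra.ι ℝ x) :=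
  eq_neg_of_add_eq_zero_left (ExteriorAlgebra.ι_add_mul_swap x y)

lemma D_mono (i j k l : Fin n) (m : ExteriorAlgebra ℝ ((Fin n → ℝ) × (Fin n → ℝ))) :
    DOp n hn (eB n i * eB n j * eH n k * eH n l * m)
    = (phi0 n hn (Pi.single i 1, 0) • (eB n j * eH n k * eH n l)
       - phi0 n hn (Pi.single j 1, 0) • (eB n i * eH n k * eH n l)) * m
      + eB n i * eB n j * eH n k * eH n l * DOp n hn m := by
  simp only [eB, eH, mul_assoc, D_mul_ι n hn, phi_eH_val, zero_smul, zero_sub, mul_neg,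
    mul_sub, mul_smul_comm, sub_mul, smul_mul_assoc, neg_mul, neg_neg, neg_sub, sub_sub_cancel]
  module

lemma D_curvR (R : Fin n → Fin n → Fin n → Fin n → ℝ)
    (m : ExteriorAlgebra ℝ ((Fin n → ℝ) × (Fin n → ℝ))) :
    DOp n hn (curvR n R * m)
    = (8:ℝ)⁻¹ • ((∑ j, ∑ k, ∑ l, R ⟨0,hn⟩ j k l • ((eB n j * eH n k * eH n l) * m))
        - ∑ i, ∑ k, ∑ l, R i ⟨0,hn⟩ k l • ((eB n i * eH n k * eH n l) * m))
      + curvR n R * DOp n hn m := by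
  simp only [curvR, smul_mul_assoc, map_smul, Finset.sum_mul, map_sum, D_mono n hn,
    phi_eB_val, smul_add, Finset.sum_add_distrib, sub_mul, smul_sub, smul_smul,
    mul_ite, mul_one, mul_zero, ite_smul, zero_smul, Finset.sum_ite_irrel,
    Finset.sum_const_zero, Finset.sum_ite_eq, Finset.mem_univ, if_true,
    Finset.sum_sub_distrib, one_smul, ite_mul, zero_mul, smul_ite, smul_zero]

lemma swap_nn {x y w : ExteriorAlgebra ℝ ((Fin n → ℝ) × (Fin n → ℝ))}
    (hx : x * w = -(w * x)) (hy : y * w = -(w * y)) :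
    (x * y) * w = w * (x * y) := by
  rw [mul_assoc, hy, mul_neg, ← mul_assoc, hx, neg_mul, neg_neg, mul_assoc]

lemma swap_pn {x y w : ExteriorAlgebra ℝ ((Fin n → ℝ) × (Fin n → ℝ))}
    (hx : x * w = w * x) (hy : y * w = -(w * y)) :
    (x * y) * w = -(w * (x * y)) := by
  rw [mul_assoc, hy, mul_neg, ← mul_assoc, hx, mul_assoc]

lemma mono_comm (i j k l : Fin n) :
    (eB n i * eB n j * eH n k * eH n l) * eB n ⟨0,hn⟩
      = eB n ⟨0,hn⟩ * (eB n i * eB n j * eH n k * eH n l) := by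
  have h : ∀ v : (Fin n → ℝ) × (Fin n → ℝ),
      ExteriorAlgebra.ι ℝ v * eB n ⟨0,hn⟩ = -(eB n ⟨0,hn⟩ * ExteriorAlgebra.ι ℝ v) :=
    fun v => ι_anticomm n v _
  have h2 : (eB n i * eB n j) * eB n ⟨0,hn⟩ = eB n ⟨0,hn⟩ * (eB n i * eB n j) :=
    swap_nn n (h _) (h _)
  have h3 : (eB n i * eB n j * eH n k) * eB n ⟨0,hn⟩
      = -(eB n ⟨0,hn⟩ * (eB n i * eB n j * eH n k)) := swap_pn n h2 (h _)
  exact swap_nn n h3 (h _)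

lemma e0_comm_curvR (R : Fin n → Fin n → Fin n → Fin n → ℝ)
    (x : ExteriorAlgebra ℝ ((Fin n → ℝ) × (Fin n → ℝ))) :
    eB n ⟨0,hn⟩ * (curvR n R * x) = curvR n R * (eB n ⟨0,hn⟩ * x) := by
  simp only [curvR, smul_mul_assoc, mul_smul_comm, Finset.mul_sum, Finset.sum_mul]
  congr 1
  refine Finset.sum_congr rfl fun i _ => Finset.sum_congr rfl fun j _ =>
    Finset.sum_congr rfl fun k _ => Finset.sum_congr rfl fun l _ => ?_
  congr 1
  rw [← mul_assoc, ← mono_comm n hn i j k l, mul_assoc]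

lemma e0_mul_P (R : Fin n → Fin n → Fin n → Fin n → ℝ)
    (hR : ∀ i j k l, R i j k l = - R j i k l)
    (m : ExteriorAlgebra ℝ ((Fin n → ℝ) × (Fin n → ℝ))) :
    eB n ⟨0,hn⟩ * ((8:ℝ)⁻¹ •
      ((∑ j, ∑ k, ∑ l, R ⟨0,hn⟩ j k l • ((eB n j * eH n k * eH n l) * m))
        - ∑ i, ∑ k, ∑ l, R i ⟨0,hn⟩ k l • ((eB n i * eH n k * eH n l) * m)))
      = curvR0 n hn R * m := by
  have h2 : ∀ i k l, R i ⟨0,hn⟩ k l = -R ⟨0,hn⟩ i k l := fun i k l => hR i _ k l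
  simp only [h2, neg_smul, Finset.sum_neg_distrib, sub_neg_eq_add, curvR0,
    smul_mul_assoc, Finset.sum_mul, mul_smul_comm, Finset.mul_sum, smul_add, mul_assoc]
  rw [← add_smul]
  norm_num [mul_smul_comm, Finset.mul_sum]

end

theorem commutator_curvR_with_boundary_ops (n : ℕ) (hn : 0 < n)
    (R : Fin n → Fin n → Fin n → Fin n → ℝ)
    (hR : ∀ i j k l, R i j k l = - R j i k l) :
    mulL n (curvR n R) * (DOp n hn * mulL n (eB n ⟨0, hn⟩)) -
        (DOp n hn * mulL n (eB n ⟨0, hn⟩)) * mulL n (curvR n R) =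
      mulL n (curvR0 n hn R) ∧
    mulL n (curvR n R) * (mulL n (eB n ⟨0, hn⟩) * DOp n hn) -
        (mulL n (eB n ⟨0, hn⟩) * DOp n hn) * mulL n (curvR n R) =
      - mulL n (curvR0 n hn R) := by
  have hphi : phi0 n hn ((Pi.single (⟨0,hn⟩ : Fin n) 1 : Fin n → ℝ), 0) = 1 := by
    rw [phi_eB_val, if_pos rfl]
  have hDe0 : ∀ x, DOp n hn (eB n ⟨0,hn⟩ * x) = x - eB n ⟨0,hn⟩ * DOp n hn x := by
    intro x; rw [eB, D_mul_ι, hphi, one_smul]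
  constructor
  · refine LinearMap.ext fun m => ?_
    simp only [mulL, Module.End.mul_apply, LinearMap.sub_apply, LinearMap.mulLeft_apply]
    rw [hDe0 m, hDe0 (curvR n R * m), D_curvR n hn R m, mul_sub, mul_add,
      e0_mul_P n hn R hR m, e0_comm_curvR n hn R ((DOp n hn) m)]
    abel
  · refine LinearMap.ext fun m => ?_
    simp only [mulL, Module.End.mul_apply, LinearMap.sub_apply, LinearMap.neg_apply,
      LinearMap.mulLeft_apply]
    rw [D_curvR n hn R m, mul_add, e0_mul_P n hn R hR m,
      e0_comm_curvR n hn R ((DOp n hn) m)]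
    abel
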